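/- arXiv:2310.19021 — 6 statements merged into one kernel-verified Lean document; each statement's English description precedes it below -/
import Mathlib

section
/- Let V, A_1,…,A_m, c, n, H, Ric, Θ_p be as in the setting, with n ≥ 4. Assume that Ric(X) ≥ (n−2)(c+H²) for every unit vector X ∈ V. Then for every integer p with 2 ≤ p ≤ n/2 and every orthonormal basis e_1,…,e_n of V one has Θ_p ≤ p(n−p)c. (Pointwise form of Proposition 2, part (i).) -/
open scoped RealInnerProductSpace

/-- The Ricci curvature at a point of a submanifold, expressed through the shape
operators `A_α` via the Gauss equation: for a unit vector `X`,
`Ric X = (n-1)c + Σ_α tr(A_α)⟨A_α X, X⟩ − Σ_α ‖A_α X‖²`. -/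
noncomputable def RicCurv {V : Type*} [NormedAddCommGroup V] [InnerProductSpace ℝ V]
    (m n : ℕ) (c : ℝ) (A : Fin m → V →ₗ[ℝ] V) (X : V) : ℝ :=
  ((n : ℝ) - 1) * c + (∑ α : Fin m, LinearMap.trace ℝ V (A α) * ⟪(A α) X, X⟫)
    - ∑ α : Fin m, ‖(A α) X‖ ^ 2

/-- The Lawson–Simons quantity `Θ_p` associated to an orthonormal basis
`e_1, …, e_n` and an integer `p`:
`Θ_p = Σ_{i≤p} Σ_{j>p} (2 Σ_α ⟨A_α e_i, e_j⟩² − Σ_α ⟨A_α e_i, e_i⟩⟨A_α e_j, e_j⟩)`. -/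
noncomputable def Theta {V : Type*} [NormedAddCommGroup V] [InnerProductSpace ℝ V]
    (m : ℕ) {n : ℕ} (p : ℕ) (A : Fin m → V →ₗ[ℝ] V)
    (e : OrthonormalBasis (Fin n) ℝ V) : ℝ :=
  ∑ i ∈ Finset.univ.filter (fun i : Fin n => (i : ℕ) < p),
    ∑ j ∈ Finset.univ.filter (fun j : Fin n => p ≤ (j : ℕ)),
      (2 * ∑ α : Fin m, ⟪(A α) (e i), e j⟫ ^ 2
        - ∑ α : Fin m, ⟪(A α) (e i), e i⟫ * ⟪(A α) (e j), e j⟫)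

/-- The quantity `T_p = Σ_α (tr A_α) Σ_{i≤p} ⟨A_α e_i, e_i⟩`. -/
noncomputable def Tsum {V : Type*} [NormedAddCommGroup V] [InnerProductSpace ℝ V]
    (m : ℕ) {n : ℕ} (p : ℕ) (A : Fin m → V →ₗ[ℝ] V)
    (e : OrthonormalBasis (Fin n) ℝ V) : ℝ :=
  ∑ α : Fin m, LinearMap.trace ℝ V (A α) *
    ∑ i ∈ Finset.univ.filter (fun i : Fin n => (i : ℕ) < p), ⟪(A α) (e i), e i⟫

/-- The squared length `S = Σ_α tr(A_α²)` of the second fundamental form. -/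
noncomputable def Ssec {V : Type*} [NormedAddCommGroup V] [InnerProductSpace ℝ V]
    (m : ℕ) (A : Fin m → V →ₗ[ℝ] V) : ℝ :=
  ∑ α : Fin m, LinearMap.trace ℝ V (A α ∘ₗ A α)

/-!
The Ricci bound at `e i` bounds `Σ_α ‖A_α e_i‖²` by `k + Σ_α (tr A_α) h^α_ii` with
`k = c - (n-2)H²`. Summing it over the first `p` and over the last `q = n - p` basis vectors,
and bounding the diagonal blocks from below by Cauchy–Schwarz, controls the mixed block
`X = Σ_α Σ_{i ≤ p < j} (h^α_ij)²` by the partial traces `a_α`, `b_α` of `A_α`. Since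
`Θ_p = 2X - Σ_α a_α b_α`, a nonnegative combination of the two estimates leaves a quadratic form
in `(a_α, b_α)` that is a nonnegative multiple of `(q a_α - p b_α)²`, and what remains is
`pq k + pq(n-2)H² = pqc`.
-/

open Finset

theorem exists_multipliers_quadratic_le {p q : ℝ} (hp : 2 ≤ p) (hq : 2 ≤ q) :
    ∃ β γ : ℝ, 0 ≤ β ∧ 0 ≤ γ ∧ 2 ≤ β + γ ∧ β * p + γ * q = p * q ∧
      ∀ x y : ℝ, β * ((x + y) * x - x ^ 2 / p) + γ * ((x + y) * y - y ^ 2 / q) - x * y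
        ≤ p * q * (p + q - 2) / (p + q) ^ 2 * (x + y) ^ 2 := by
  have hp0 : 0 ≤ p := by linarith
  have hq0 : 0 ≤ q := by linarith
  have hn : 0 < p + q := by linarith
  have hn2 : 0 < p + q - 2 := by linarith
  -- The unique multipliers for which the defect form is a multiple of `(q x - p y)²`: it must
  -- vanish at `x / p = y / q`, the umbilic case, where the theorem is sharp.
  refine ⟨2 * p * q / (p + q) - q * (p - 1) / (p + q - 2),
    2 * p * q / (p + q) - p * (q - 1) / (p + q - 2), ?_, ?_, ?_, ?_, fun x y => ?_⟩
  · rw [sub_nonneg, div_le_div_iff₀ hn2 hn]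
    nlinarith [mul_nonneg (mul_nonneg hq0 hp0) (sub_nonneg.2 hp),
      mul_nonneg (mul_nonneg hq0 hp0) (sub_nonneg.2 hq), mul_nonneg hq0 hq0]
  · rw [sub_nonneg, div_le_div_iff₀ hn2 hn]
    nlinarith [mul_nonneg (mul_nonneg hp0 hq0) (sub_nonneg.2 hq),
      mul_nonneg (mul_nonneg hp0 hq0) (sub_nonneg.2 hp), mul_nonneg hp0 hp0]
  · rw [← sub_nonneg]
    have hsum : 2 * p * q / (p + q) - q * (p - 1) / (p + q - 2) +
        (2 * p * q / (p + q) - p * (q - 1) / (p + q - 2)) - 2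
        = (p + q - 4) * (2 * p * q - (p + q)) / ((p + q) * (p + q - 2)) := by
      field_simp
      ring
    rw [hsum]
    apply div_nonneg _ (by positivity)
    apply mul_nonneg <;> nlinarith
  · field_simp
    ring
  · rw [← sub_nonneg]
    have hdefect : p * q * (p + q - 2) / (p + q) ^ 2 * (x + y) ^ 2 -
        ((2 * p * q / (p + q) - q * (p - 1) / (p + q - 2)) * ((x + y) * x - x ^ 2 / p)
          + (2 * p * q / (p + q) - p * (q - 1) / (p + q - 2)) * ((x + y) * y - y ^ 2 / q)
          - x * y)
        = (q - p) ^ 2 * (q * x - p * y) ^ 2 / (p * q * (p + q) ^ 2 * (p + q - 2)) := by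
      have : p ≠ 0 := by linarith
      have : q ≠ 0 := by linarith
      field_simp
      ring
    rw [hdefect]
    positivity

theorem two_mul_sub_sum_mul_le {ι : Type*} (s : Finset ι) (a b : ι → ℝ) {p q k X : ℝ}
    (hp : 2 ≤ p) (hq : 2 ≤ q) (hX : 0 ≤ X)
    (ha : X + (∑ α ∈ s, a α ^ 2) / p ≤ p * k + ∑ α ∈ s, (a α + b α) * a α)
    (hb : X + (∑ α ∈ s, b α ^ 2) / q ≤ q * k + ∑ α ∈ s, (a α + b α) * b α) :
    2 * X - ∑ α ∈ s, a α * b α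
      ≤ p * q * k + p * q * (p + q - 2) / (p + q) ^ 2 * ∑ α ∈ s, (a α + b α) ^ 2 := by
  obtain ⟨β, γ, hβ, hγ, hβγ, hk, hquad⟩ := exists_multipliers_quadratic_le hp hq
  have hsum := sum_le_sum fun α (_ : α ∈ s) => hquad (a α) (b α)
  simp only [mul_sub β, mul_sub γ, sum_add_distrib, sum_sub_distrib, ← mul_sum,
    ← sum_div] at hsum
  nlinarith [mul_le_mul_of_nonneg_left ha hβ, mul_le_mul_of_nonneg_left hb hγ,
    mul_nonneg (sub_nonneg.2 hβγ) hX, congrArg (· * k) hk]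

section Blocks

variable {V ι κ : Type*} [NormedAddCommGroup V] [InnerProductSpace ℝ V] [Fintype ι]

noncomputable def partialTrace (T : V →ₗ[ℝ] V) (e : OrthonormalBasis ι ℝ V) (s : Finset ι) : ℝ :=
  ∑ i ∈ s, ⟪T (e i), e i⟫

noncomputable def blockNormSq [Fintype κ] (A : κ → V →ₗ[ℝ] V) (e : OrthonormalBasis ι ℝ V)
    (s t : Finset ι) : ℝ :=
  ∑ α, ∑ i ∈ s, ∑ j ∈ t, ⟪A α (e i), e j⟫ ^ 2

theorem partialTrace_add_compl [DecidableEq ι] (T : V →ₗ[ℝ] V) (e : OrthonormalBasis ι ℝ V)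
    (s : Finset ι) : partialTrace T e s + partialTrace T e sᶜ = LinearMap.trace ℝ V T := by
  simp only [partialTrace, sum_add_sum_compl, LinearMap.trace_eq_sum_inner T e,
    real_inner_comm]

theorem blockNormSq_comm [Fintype κ] {A : κ → V →ₗ[ℝ] V} (hA : ∀ α, (A α).IsSymmetric)
    (e : OrthonormalBasis ι ℝ V) (s t : Finset ι) :
    blockNormSq A e s t = blockNormSq A e t s := by
  unfold blockNormSq
  refine sum_congr rfl fun α _ => sum_comm.trans
    (sum_congr rfl fun j _ => sum_congr rfl fun i _ => ?_)
  rw [hA α, real_inner_comm]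

theorem sq_inner_add_sum_compl_le_norm_sq [DecidableEq ι] (e : OrthonormalBasis ι ℝ V)
    (x : V) {s : Finset ι} {i : ι} (hi : i ∈ s) :
    ⟪x, e i⟫ ^ 2 + ∑ j ∈ sᶜ, ⟪x, e j⟫ ^ 2 ≤ ‖x‖ ^ 2 := by
  rw [← e.sum_sq_inner_left, ← sum_add_sum_compl s]
  exact add_le_add_left
    (single_le_sum (f := fun j => ⟪x, e j⟫ ^ 2) (fun j _ => sq_nonneg _) hi) _

theorem blockNormSq_compl_add_le [Fintype κ] [DecidableEq ι] (A : κ → V →ₗ[ℝ] V)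
    (e : OrthonormalBasis ι ℝ V) (s : Finset ι) {k : ℝ}
    (hk : ∀ i, ∑ α, ‖A α (e i)‖ ^ 2 ≤ k + ∑ α, LinearMap.trace ℝ V (A α) * ⟪A α (e i), e i⟫) :
    blockNormSq A e s sᶜ + (∑ α, partialTrace (A α) e s ^ 2) / #s
      ≤ #s * k + ∑ α, LinearMap.trace ℝ V (A α) * partialTrace (A α) e s := by
  have hcs : ∀ α, partialTrace (A α) e s ^ 2 / #s ≤ ∑ i ∈ s, ⟪A α (e i), e i⟫ ^ 2 := fun α =>
    div_le_of_le_mul₀ (Nat.cast_nonneg _) (sum_nonneg fun _ _ => sq_nonneg _)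
      (by rw [mul_comm]; exact sq_sum_le_card_mul_sum_sq)
  have hrow : ∀ i ∈ s, ∑ α, (⟪A α (e i), e i⟫ ^ 2 + ∑ j ∈ sᶜ, ⟪A α (e i), e j⟫ ^ 2)
      ≤ k + ∑ α, LinearMap.trace ℝ V (A α) * ⟪A α (e i), e i⟫ := fun i hi =>
    (sum_le_sum fun α _ => sq_inner_add_sum_compl_le_norm_sq e _ hi).trans (hk i)
  calc blockNormSq A e s sᶜ + (∑ α, partialTrace (A α) e s ^ 2) / #s
      ≤ ∑ i ∈ s, ∑ α, (⟪A α (e i), e i⟫ ^ 2 + ∑ j ∈ sᶜ, ⟪A α (e i), e j⟫ ^ 2) := by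
        rw [sum_div, blockNormSq, add_comm]
        simp only [sum_add_distrib, sum_comm (s := s) (t := univ)]
        gcongr with α
        exact hcs α
    _ ≤ ∑ i ∈ s, (k + ∑ α, LinearMap.trace ℝ V (A α) * ⟪A α (e i), e i⟫) :=
        sum_le_sum hrow
    _ = #s * k + ∑ α, LinearMap.trace ℝ V (A α) * partialTrace (A α) e s := by
        simp only [sum_add_distrib, sum_const, nsmul_eq_mul, partialTrace, mul_sum]
        rw [sum_comm]

theorem blockNormSq_nonneg [Fintype κ] (A : κ → V →ₗ[ℝ] V) (e : OrthonormalBasis ι ℝ V)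
    (s t : Finset ι) : 0 ≤ blockNormSq A e s t := by
  unfold blockNormSq
  positivity

theorem theta_eq_two_mul_blockNormSq_sub (m p : ℕ) {n : ℕ} (A : Fin m → V →ₗ[ℝ] V)
    (e : OrthonormalBasis (Fin n) ℝ V) :
    let I : Finset (Fin n) := {i | (i : ℕ) < p}
    Theta m p A e = 2 * blockNormSq A e I Iᶜ
      - ∑ α, partialTrace (A α) e I * partialTrace (A α) e Iᶜ := by
  simp only [Theta, compl_filter, not_lt, blockNormSq, partialTrace, sum_mul_sum,
    mul_sum (a := (2 : ℝ)), ← sum_sub_distrib]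
  exact sum_comm_cycle

end Blocks

theorem ricci_pinched_theta_le_general {V : Type*} [NormedAddCommGroup V] [InnerProductSpace ℝ V]
    (n m : ℕ)
    (A : Fin m → V →ₗ[ℝ] V) (hsymm : ∀ α : Fin m, (A α).IsSymmetric)
    (c H : ℝ)
    (hHdef : (n : ℝ) ^ 2 * H ^ 2 = ∑ α : Fin m, (LinearMap.trace ℝ V (A α)) ^ 2)
    (hRic : ∀ X : V, ‖X‖ = 1 → RicCurv m n c A X ≥ ((n : ℝ) - 2) * (c + H ^ 2)) :
    ∀ p : ℕ, 2 ≤ p → 2 * p ≤ n → ∀ e : OrthonormalBasis (Fin n) ℝ V,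
      Theta m p A e ≤ (p : ℝ) * ((n : ℝ) - p) * c := by
  intro p hp hpn e
  set I : Finset (Fin n) := {i | (i : ℕ) < p}
  have hk : ∀ i, ∑ α, ‖A α (e i)‖ ^ 2
      ≤ c - (n - 2) * H ^ 2 + ∑ α, LinearMap.trace ℝ V (A α) * ⟪A α (e i), e i⟫ := fun i => by
    have := hRic (e i) (e.orthonormal.1 i)
    rw [RicCurv] at this
    linarith
  have hI : (#I : ℝ) = p := by
    rw [Fin.card_filter_val_lt, min_eq_right (by omega)]
  have hIc : (#Iᶜ : ℝ) = n - p := by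
    rw [card_compl, Fintype.card_fin, Fin.card_filter_val_lt, min_eq_right (by omega),
      Nat.cast_sub (by omega)]
  have htr : ∀ α,
      LinearMap.trace ℝ V (A α) = partialTrace (A α) e I + partialTrace (A α) e Iᶜ := fun α => (partialTrace_add_compl (A α) e I).symm
  have hB := blockNormSq_compl_add_le A e I hk
  have hC := blockNormSq_compl_add_le A e Iᶜ hk
  rw [compl_compl, blockNormSq_comm hsymm] at hC
  simp only [htr, hI, hIc] at hB hC hHdef
  have hq : (2 : ℝ) ≤ n - p := by
    rw [le_sub_iff_add_le]
    exact_mod_cast (by omega : 2 + p ≤ n)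
  have hΘ := two_mul_sub_sum_mul_le univ _ _ (by exact_mod_cast hp) hq
    (blockNormSq_nonneg A e I Iᶜ) hB hC
  rw [add_sub_cancel, ← hHdef] at hΘ
  have hn : (n : ℝ) ≠ 0 := by norm_cast; omega
  rw [theta_eq_two_mul_blockNormSq_sub]
  exact hΘ.trans_eq (by field_simp; ring)

theorem ricci_pinched_theta_le {V : Type*} [NormedAddCommGroup V] [InnerProductSpace ℝ V]
    [FiniteDimensional ℝ V] (n m : ℕ)
    (hdim : Module.finrank ℝ V = n)
    (A : Fin m → V →ₗ[ℝ] V) (hsymm : ∀ α : Fin m, (A α).IsSymmetric)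
    (c H : ℝ) (hH : 0 ≤ H)
    (hHdef : (n : ℝ) ^ 2 * H ^ 2 = ∑ α : Fin m, (LinearMap.trace ℝ V (A α)) ^ 2)
    (hn : 4 ≤ n)
    (hRic : ∀ X : V, ‖X‖ = 1 → RicCurv m n c A X ≥ ((n : ℝ) - 2) * (c + H ^ 2)) :
    ∀ p : ℕ, 2 ≤ p → 2 * p ≤ n → ∀ e : OrthonormalBasis (Fin n) ℝ V,
      Theta m p A e ≤ (p : ℝ) * ((n : ℝ) - p) * c :=
  ricci_pinched_theta_le_general n m A hsymm c H hHdef hRic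
end

section
/- Let V, A_1,…,A_m, c, n, H, Ric, Θ_p be as in the setting, with n ≥ 6 even and p = n/2. Assume Ric(X) ≥ (n−2)(c+H²) for every unit vector X ∈ V, and that for some orthonormal basis e_1,…,e_n of V equality Θ_p = p(n−p)c holds. Then for every α ∈ {1,…,m} there exist real numbers ρ_α and μ_α such that ⟨A_α e_i, e_j⟩ = ρ_α δ_{ij} for all 1 ≤ i, j ≤ p, ⟨A_α e_i, e_j⟩ = μ_α δ_{ij} for all p+1 ≤ i, j ≤ n, and ⟨A_α e_i, e_j⟩ = 0 whenever 1 ≤ i ≤ p < j ≤ n. (Dupin principal normal structure in Proposition 2, part (ii)(a).) -/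
/-!
Write `x α i j = ⟪A_α e_i, e_j⟫` and split the basis into `s = {e_1, …, e_k}` and its
complement. Summing the Gauss equation over the basis and using `n²H² = Σ_α (tr A_α)²` gives
`k Σ_i (Ric e_i − (n−2)(c+H²)) + D_s + D_sᶜ + 2(k−2) Σ_α Σ_{i ∈ s, j ∉ s} x α i j ² = 2(k²c − Θ_k)`,
where `D_t = Σ_α (k Σ_{i,j ∈ t} x α i j ² − (Σ_{i ∈ t} x α i i)²)` is a sum of Cauchy–Schwarz
defects, which vanish exactly when the diagonal blocks are multiples of the identity. Under the
Ricci pinching every term on the left is nonnegative, and `k ≥ 3` makes the last coefficient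
positive, so `Θ_k = k²c` forces all of them to vanish.
-/

open scoped RealInnerProductSpace

open Finset

section BlockDefect

variable {ι : Type*}

/-- The defect in the Cauchy–Schwarz inequality `(tr X)² ≤ #s ‖X‖²` for the block
`X = (x i j)_{i, j ∈ s}`. -/
def blockDefect (s : Finset ι) (x : ι → ι → ℝ) : ℝ :=
  #s * ∑ i ∈ s, ∑ j ∈ s, x i j ^ 2 - (∑ i ∈ s, x i i) ^ 2

variable [DecidableEq ι]

theorem card_mul_blockDefect (s : Finset ι) (x : ι → ι → ℝ) :
    #s * blockDefect s x = ∑ i ∈ s, (#s * x i i - ∑ j ∈ s, x j j) ^ 2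
      + #s ^ 2 * ∑ p ∈ s.offDiag, x p.1 p.2 ^ 2 := by
  have hdiag : ∑ i ∈ s, ∑ j ∈ s, x i j ^ 2
      = ∑ i ∈ s, x i i ^ 2 + ∑ p ∈ s.offDiag, x p.1 p.2 ^ 2 := by
    rw [← sum_product' (f := fun i j => x i j ^ 2), ← diag_union_offDiag,
      sum_union (disjoint_diag_offDiag s), sum_diag]
  have hvar : ∑ i ∈ s, (#s * x i i - ∑ j ∈ s, x j j) ^ 2
      = #s ^ 2 * ∑ i ∈ s, x i i ^ 2 - #s * (∑ i ∈ s, x i i) ^ 2 := by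
    simp only [sub_sq, sum_add_distrib, sum_sub_distrib, mul_pow, ← mul_sum, ← sum_mul,
      sum_const, nsmul_eq_mul]
    ring
  rw [blockDefect, hdiag, hvar]
  ring

theorem blockDefect_nonneg (s : Finset ι) (x : ι → ι → ℝ) : 0 ≤ blockDefect s x := by
  rcases s.eq_empty_or_nonempty with rfl | hs
  · simp [blockDefect]
  have hcard : (0 : ℝ) < #s := by exact_mod_cast hs.card_pos
  have : 0 ≤ (#s : ℝ) * blockDefect s x := by
    rw [card_mul_blockDefect]
    positivity
  exact nonneg_of_mul_nonneg_right this hcard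

theorem eq_ite_of_blockDefect_eq_zero {s : Finset ι} {x : ι → ι → ℝ}
    (h : blockDefect s x = 0) :
    ∀ i ∈ s, ∀ j ∈ s, x i j = if i = j then (∑ l ∈ s, x l l) / #s else 0 := by
  intro i hi j hj
  have hcard : (0 : ℝ) < #s := by exact_mod_cast card_pos.mpr ⟨i, hi⟩
  have hsum := card_mul_blockDefect s x
  rw [h, mul_zero, eq_comm, add_eq_zero_iff_of_nonneg (by positivity) (by positivity)] at hsum
  obtain ⟨hdiag, hoff⟩ := hsum
  split_ifs with hij
  · subst hij
    rw [eq_div_iff hcard.ne', mul_comm]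
    have := (sum_eq_zero_iff_of_nonneg fun _ _ => sq_nonneg _).mp hdiag i hi
    linarith [pow_eq_zero_iff two_ne_zero |>.mp this]
  · have hoff' := (mul_eq_zero.mp hoff).resolve_left (by positivity)
    have := (sum_eq_zero_iff_of_nonneg fun _ _ => sq_nonneg _).mp hoff' (i, j)
      (mem_offDiag.mpr ⟨hi, hj, hij⟩)
    exact pow_eq_zero_iff two_ne_zero |>.mp this

end BlockDefect

section Pinching

variable {κ ι : Type*} [Fintype κ] [Fintype ι] [DecidableEq ι]

theorem sum_sum_eq_blocks_of_symm (s : Finset ι) (f : ι → ι → ℝ) (hf : ∀ i j, f i j = f j i) :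
    ∑ i, ∑ j, f i j
      = ∑ i ∈ s, ∑ j ∈ s, f i j + ∑ i ∈ sᶜ, ∑ j ∈ sᶜ, f i j + 2 * ∑ i ∈ s, ∑ j ∈ sᶜ, f i j := by
  have hmixed : ∑ i ∈ sᶜ, ∑ j ∈ s, f i j = ∑ i ∈ s, ∑ j ∈ sᶜ, f i j := by
    rw [sum_comm]
    simp only [hf]
  simp only [← sum_add_sum_compl s, sum_add_distrib, hmixed]
  ring

theorem pinching_identity (x : κ → ι → ι → ℝ) (hx : ∀ α i j, x α i j = x α j i)
    (s : Finset ι) {k : ℕ} (hs : #s = k) (hsc : #sᶜ = k) (c H : ℝ)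
    (hH : (2 * k : ℝ) ^ 2 * H ^ 2 = ∑ α, (∑ i, x α i i) ^ 2) :
    k * ∑ i, ((2 * k - 1) * c + ∑ α, (∑ l, x α l l) * x α i i - ∑ α, ∑ j, x α i j ^ 2
        - (2 * k - 2) * (c + H ^ 2))
      + ∑ α, blockDefect s (x α) + ∑ α, blockDefect sᶜ (x α)
      + 2 * (k - 2) * ∑ α, ∑ i ∈ s, ∑ j ∈ sᶜ, x α i j ^ 2
    = 2 * (k ^ 2 * c
        - ∑ i ∈ s, ∑ j ∈ sᶜ, (2 * ∑ α, x α i j ^ 2 - ∑ α, x α i i * x α j j)) := by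
  have hcard : (Fintype.card ι : ℝ) = 2 * k := by
    rw [← card_add_card_compl s, hs, hsc]
    push_cast
    ring
  have hricci : ∑ i, ((2 * k - 1) * c + ∑ α, (∑ l, x α l l) * x α i i - ∑ α, ∑ j, x α i j ^ 2
        - (2 * k - 2) * (c + H ^ 2))
      = 2 * k * ((2 * k - 1) * c - (2 * k - 2) * (c + H ^ 2))
        + ∑ α, (∑ l, x α l l) ^ 2 - ∑ α, ∑ i, ∑ j, x α i j ^ 2 := by
    have hmixed : ∑ i, ∑ α, (∑ l, x α l l) * x α i i = ∑ α, (∑ l, x α l l) ^ 2 := by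
      rw [sum_comm]
      simp only [← mul_sum, sq]
    simp only [sum_sub_distrib, sum_add_distrib, sum_const, card_univ, nsmul_eq_mul, hcard,
      hmixed, sum_comm (γ := κ) (α := ι)]
    ring
  have htrace : ∀ α, ∑ l, x α l l = ∑ l ∈ s, x α l l + ∑ l ∈ sᶜ, x α l l :=
    fun α => (sum_add_sum_compl s _).symm
  have hsq : ∀ α, ∑ i, ∑ j, x α i j ^ 2 = ∑ i ∈ s, ∑ j ∈ s, x α i j ^ 2
      + ∑ i ∈ sᶜ, ∑ j ∈ sᶜ, x α i j ^ 2 + 2 * ∑ i ∈ s, ∑ j ∈ sᶜ, x α i j ^ 2 :=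
    fun α => sum_sum_eq_blocks_of_symm s _ fun i j => by rw [hx]
  have htheta : ∑ i ∈ s, ∑ j ∈ sᶜ, (2 * ∑ α, x α i j ^ 2 - ∑ α, x α i i * x α j j)
      = 2 * ∑ α, ∑ i ∈ s, ∑ j ∈ sᶜ, x α i j ^ 2
        - ∑ α, (∑ i ∈ s, x α i i) * ∑ j ∈ sᶜ, x α j j := by
    have hswap : ∀ f : κ → ι → ι → ℝ,
        ∑ i ∈ s, ∑ j ∈ sᶜ, ∑ α, f α i j = ∑ α, ∑ i ∈ s, ∑ j ∈ sᶜ, f α i j := fun f => by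
      simp only [sum_comm (s := sᶜ) (t := (univ : Finset κ)),
        sum_comm (s := s) (t := (univ : Finset κ))]
    simp only [sum_sub_distrib, ← mul_sum, hswap, sum_mul_sum]
  have htrace_sq : ∑ α, (∑ l, x α l l) ^ 2 = ∑ α, (∑ l ∈ s, x α l l) ^ 2
      + 2 * ∑ α, (∑ i ∈ s, x α i i) * ∑ j ∈ sᶜ, x α j j + ∑ α, (∑ l ∈ sᶜ, x α l l) ^ 2 := by
    rw [mul_sum, ← sum_add_distrib, ← sum_add_distrib]
    exact sum_congr rfl fun α _ => by rw [htrace]; ring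
  have hsq_sum : ∑ α, ∑ i, ∑ j, x α i j ^ 2 = ∑ α, ∑ i ∈ s, ∑ j ∈ s, x α i j ^ 2
      + ∑ α, ∑ i ∈ sᶜ, ∑ j ∈ sᶜ, x α i j ^ 2 + 2 * ∑ α, ∑ i ∈ s, ∑ j ∈ sᶜ, x α i j ^ 2 := by
    rw [mul_sum, ← sum_add_distrib, ← sum_add_distrib]
    exact sum_congr rfl fun α _ => hsq α
  rw [hricci, htheta]
  simp only [blockDefect, hs, hsc, sum_sub_distrib, ← mul_sum]
  linear_combination htrace_sq - k * hsq_sum - (k - 1) * hH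

theorem blockDefect_eq_zero_of_pinching_of_theta_eq (x : κ → ι → ι → ℝ)
    (hx : ∀ α i j, x α i j = x α j i) (s : Finset ι) {k : ℕ} (hk : 3 ≤ k) (hs : #s = k)
    (hsc : #sᶜ = k) (c H : ℝ) (hH : (2 * k : ℝ) ^ 2 * H ^ 2 = ∑ α, (∑ i, x α i i) ^ 2)
    (hRic : ∀ i, (2 * k - 2) * (c + H ^ 2)
      ≤ (2 * k - 1) * c + ∑ α, (∑ l, x α l l) * x α i i - ∑ α, ∑ j, x α i j ^ 2)
    (hΘ : ∑ i ∈ s, ∑ j ∈ sᶜ, (2 * ∑ α, x α i j ^ 2 - ∑ α, x α i i * x α j j) = k ^ 2 * c) :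
    ∀ α, blockDefect s (x α) = 0 ∧ blockDefect sᶜ (x α) = 0 ∧ ∀ i ∈ s, ∀ j ∈ sᶜ, x α i j = 0 := by
  have hid := pinching_identity x hx s hs hsc c H hH
  rw [hΘ, sub_self, mul_zero] at hid
  have hR : 0 ≤ (k : ℝ) * ∑ i, ((2 * k - 1) * c + ∑ α, (∑ l, x α l l) * x α i i
      - ∑ α, ∑ j, x α i j ^ 2 - (2 * k - 2) * (c + H ^ 2)) :=
    mul_nonneg k.cast_nonneg (sum_nonneg fun i _ => sub_nonneg.mpr (hRic i))
  have hDs : 0 ≤ ∑ α, blockDefect s (x α) := sum_nonneg fun α _ => blockDefect_nonneg _ _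
  have hDc : 0 ≤ ∑ α, blockDefect sᶜ (x α) := sum_nonneg fun α _ => blockDefect_nonneg _ _
  have hk2 : (0 : ℝ) < 2 * (k - 2) := by
    have : (3 : ℝ) ≤ k := by exact_mod_cast hk
    linarith
  have hN : 0 ≤ 2 * (k - 2) * ∑ α, ∑ i ∈ s, ∑ j ∈ sᶜ, x α i j ^ 2 := by positivity
  have hDs0 := (sum_eq_zero_iff_of_nonneg fun α _ => blockDefect_nonneg s (x α)).mp
    (by linarith)
  have hDc0 := (sum_eq_zero_iff_of_nonneg fun α _ => blockDefect_nonneg sᶜ (x α)).mp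
    (by linarith)
  have hN0 : ∑ α, ∑ i ∈ s, ∑ j ∈ sᶜ, x α i j ^ 2 = 0 :=
    (mul_eq_zero.mp (by linarith)).resolve_left hk2.ne'
  intro α
  refine ⟨hDs0 α (mem_univ α), hDc0 α (mem_univ α), fun i hi j hj => ?_⟩
  have hα := (sum_eq_zero_iff_of_nonneg fun _ _ => by positivity).mp hN0 α (mem_univ α)
  have hαi := (sum_eq_zero_iff_of_nonneg fun _ _ => by positivity).mp hα i hi
  exact pow_eq_zero_iff two_ne_zero |>.mp <|
    (sum_eq_zero_iff_of_nonneg fun _ _ => by positivity).mp hαi j hj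

end Pinching

theorem RicCurv_apply_orthonormalBasis {V ι : Type*} [NormedAddCommGroup V]
    [InnerProductSpace ℝ V] [Fintype ι] {m : ℕ} (n : ℕ) (c : ℝ) (A : Fin m → V →ₗ[ℝ] V)
    (e : OrthonormalBasis ι ℝ V) (i : ι) :
    RicCurv m n c A (e i) = (n - 1) * c + ∑ α, (∑ l, ⟪A α (e l), e l⟫) * ⟪A α (e i), e i⟫
      - ∑ α, ∑ j, ⟪A α (e i), e j⟫ ^ 2 := by
  simp only [RicCurv, LinearMap.trace_eq_sum_inner _ e, ← e.sum_sq_inner_left,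
    real_inner_comm _ (e _)]

theorem ricci_pinched_equality_dupin_general {V : Type*} [NormedAddCommGroup V] [InnerProductSpace ℝ V]
    (n m : ℕ)
    (A : Fin m → V →ₗ[ℝ] V) (hsymm : ∀ α : Fin m, (A α).IsSymmetric)
    (c H : ℝ)
    (hHdef : (n : ℝ) ^ 2 * H ^ 2 = ∑ α : Fin m, (LinearMap.trace ℝ V (A α)) ^ 2)
    (k : ℕ) (hn6 : 6 ≤ n) (hnk : n = 2 * k)
    (hRic : ∀ X : V, ‖X‖ = 1 → RicCurv m n c A X ≥ ((n : ℝ) - 2) * (c + H ^ 2))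
    (e : OrthonormalBasis (Fin n) ℝ V)
    (heq : Theta m k A e = (k : ℝ) * ((n : ℝ) - k) * c) :
    ∀ α : Fin m, ∃ ρ μ : ℝ,
      (∀ i j : Fin n, (i : ℕ) < k → (j : ℕ) < k →
        ⟪(A α) (e i), e j⟫ = if i = j then ρ else 0) ∧
      (∀ i j : Fin n, k ≤ (i : ℕ) → k ≤ (j : ℕ) →
        ⟪(A α) (e i), e j⟫ = if i = j then μ else 0) ∧
      (∀ i j : Fin n, (i : ℕ) < k → k ≤ (j : ℕ) →
        ⟪(A α) (e i), e j⟫ = 0) := by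
  set s : Finset (Fin n) := univ.filter fun i => (i : ℕ) < k
  have hsc : sᶜ = univ.filter fun j : Fin n => k ≤ (j : ℕ) := by ext; simp [s]
  have hs : #s = k := by simp [s, Fin.card_filter_val_lt]; omega
  have hsc' : #sᶜ = k := by rw [card_compl, hs, Fintype.card_fin]; omega
  have hn : (n : ℝ) = 2 * k := by exact_mod_cast hnk
  have hblocks := blockDefect_eq_zero_of_pinching_of_theta_eq (fun α i j => ⟪A α (e i), e j⟫)
    (fun α i j => by rw [hsymm, real_inner_comm]) s (by omega) hs hsc' c H
    (by simpa only [hn, LinearMap.trace_eq_sum_inner _ e, real_inner_comm _ (e _)] using hHdef)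
    (fun i => by
      simpa only [RicCurv_apply_orthonormalBasis, hn] using hRic (e i) (e.norm_eq_one i))
    (by rw [hsc]; unfold Theta at heq; rw [heq, hn]; ring)
  intro α
  obtain ⟨hDs, hDc, hmixed⟩ := hblocks α
  exact ⟨_, _,
    fun i j hi hj => eq_ite_of_blockDefect_eq_zero hDs i (by simpa [s]) j (by simpa [s]),
    fun i j hi hj => eq_ite_of_blockDefect_eq_zero hDc i (by simpa [hsc]) j (by simpa [hsc]),
    fun i j hi hj => hmixed i (by simpa [s]) j (by simpa [hsc])⟩

theorem ricci_pinched_equality_dupin {V : Type*} [NormedAddCommGroup V] [InnerProductSpace ℝ V]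
    [FiniteDimensional ℝ V] (n m : ℕ)
    (hdim : Module.finrank ℝ V = n)
    (A : Fin m → V →ₗ[ℝ] V) (hsymm : ∀ α : Fin m, (A α).IsSymmetric)
    (c H : ℝ) (hH : 0 ≤ H)
    (hHdef : (n : ℝ) ^ 2 * H ^ 2 = ∑ α : Fin m, (LinearMap.trace ℝ V (A α)) ^ 2)
    (k : ℕ) (hn6 : 6 ≤ n) (hnk : n = 2 * k)
    (hRic : ∀ X : V, ‖X‖ = 1 → RicCurv m n c A X ≥ ((n : ℝ) - 2) * (c + H ^ 2))
    (e : OrthonormalBasis (Fin n) ℝ V)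
    (heq : Theta m k A e = (k : ℝ) * ((n : ℝ) - k) * c) :
    ∀ α : Fin m, ∃ ρ μ : ℝ,
      (∀ i j : Fin n, (i : ℕ) < k → (j : ℕ) < k →
        ⟪(A α) (e i), e j⟫ = if i = j then ρ else 0) ∧
      (∀ i j : Fin n, k ≤ (i : ℕ) → k ≤ (j : ℕ) →
        ⟪(A α) (e i), e j⟫ = if i = j then μ else 0) ∧
      (∀ i j : Fin n, (i : ℕ) < k → k ≤ (j : ℕ) →
        ⟪(A α) (e i), e j⟫ = 0) :=
  ricci_pinched_equality_dupin_general n m A hsymm c H hHdef k hn6 hnk hRic e heq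
end

section
/- Let V, A_1,…,A_m, c, n, H, Ric, Θ_p be as in the setting, and let r be a real number with Ric(X) ≥ r for every unit vector X ∈ V. Then for every integer p with 2 ≤ p ≤ n/2 and every orthonormal basis e_1,…,e_n of V one has Θ_p ≤ p(n−p)((n−1)(c+H²) − r − H²). (The combined estimate (12) in the proof of Proposition 2.) -/
open scoped RealInnerProductSpace

/-!
Write `h^α_{ij} = ⟪A_α e_i, e_j⟫`, split the basis into `I = {i < p}` and its complement `J`,
and put `X_α = Σ_{i∈I, j∈J} (h^α_{ij})²`, `s_α = Σ_I h^α_{ii}`, `u_α = Σ_J h^α_{jj}`, so that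
`Θ_p = Σ_α (2 X_α - s_α u_α)`. Summing the Ricci bound over `e_i, i ∈ I`, resp. over `J`, bounds
the row sums `P_α = Σ_{i∈I, l} (h^α_{il})²` and `Q_α` against `tr A_α · s_α` and `tr A_α · u_α`,
while Cauchy–Schwarz gives `s_α² ≤ p (P_α - X_α)` and `u_α² ≤ q (Q_α - X_α)`, `q = n - p`.
A suitable positive combination of these inequalities, with weights `lsWeight p q` and
`lsWeight q p`, leaves a perfect square `(q - p)² (q s_α - p u_α)²` and yields the estimate.
-/

open Finset

def lsWeight (p q : ℝ) : ℝ := (p + q) ^ 2 * p * (q - 1) + (p + q) * (q - p) ^ 2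

lemma lsWeight_nonneg {p q : ℝ} (hp : 0 ≤ p) (hq : 1 ≤ q) : 0 ≤ lsWeight p q :=
  add_nonneg (mul_nonneg (by positivity) (by linarith)) (by positivity)

lemma lsWeight_mul_add (p q : ℝ) :
    lsWeight p q * p + lsWeight q p * q = (p + q) ^ 2 * (p + q - 2) * (p * q) := by
  unfold lsWeight; ring

lemma two_mul_sq_le_lsWeight_add (p q : ℝ) (hp : 2 ≤ p) (hq : 2 ≤ q) :
    2 * (p + q) ^ 2 * (p + q - 2) ≤ lsWeight p q + lsWeight q p := by
  have h : 0 ≤ 2 * (p - 2) * (q - 2) + (p - 2) + (q - 2) := by nlinarith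
  have : lsWeight p q + lsWeight q p - 2 * (p + q) ^ 2 * (p + q - 2) =
      (p + q) ^ 2 * (2 * (p - 2) * (q - 2) + (p - 2) + (q - 2)) + 2 * (p + q) * (q - p) ^ 2 := by
    unfold lsWeight; ring
  nlinarith [mul_nonneg (sq_nonneg (p + q)) h, mul_nonneg (by linarith : 0 ≤ 2 * (p + q))
    (sq_nonneg (q - p))]

lemma le_lsWeight_combination {p q X s u P Q : ℝ} (hp : 2 ≤ p) (hq : 2 ≤ q) (hX : 0 ≤ X)
    (hs : s ^ 2 ≤ p * (P - X)) (hu : u ^ 2 ≤ q * (Q - X)) :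
    (p + q) ^ 2 * (p + q - 2) * (2 * X - s * u) ≤
      lsWeight p q * (P - (s + u) * s) + lsWeight q p * (Q - (s + u) * u)
        + p * q * (p + q - 2) ^ 2 * (s + u) ^ 2 := by
  have hwp : 0 ≤ lsWeight p q := lsWeight_nonneg (by linarith) (by linarith)
  have hwq : 0 ≤ lsWeight q p := lsWeight_nonneg (by linarith) (by linarith)
  have hw := two_mul_sq_le_lsWeight_add p q hp hq
  have hpq : 0 < p * q := by positivity
  rw [← sub_nonneg]
  refine nonneg_of_mul_nonneg_right ?_ hpq
  calc 0 ≤ q * lsWeight p q * (p * (P - X) - s ^ 2) + p * lsWeight q p * (q * (Q - X) - u ^ 2)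
        + p * q * (lsWeight p q + lsWeight q p - 2 * (p + q) ^ 2 * (p + q - 2)) * X
        + (q - p) ^ 2 * (q * s - p * u) ^ 2 := by
        have h₁ : 0 ≤ q * lsWeight p q * (p * (P - X) - s ^ 2) :=
          mul_nonneg (by positivity) (by linarith)
        have h₂ : 0 ≤ p * lsWeight q p * (q * (Q - X) - u ^ 2) :=
          mul_nonneg (by positivity) (by linarith)
        have h₃ : 0 ≤ p * q * (lsWeight p q + lsWeight q p - 2 * (p + q) ^ 2 * (p + q - 2)) * X :=
          mul_nonneg (mul_nonneg hpq.le (by linarith)) hX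
        positivity
    _ = _ := by unfold lsWeight; ring

namespace Matrix

variable {ι : Type*} [Fintype ι]

def rowSqSum (a : Matrix ι ι ℝ) (I : Finset ι) : ℝ := ∑ i ∈ I, ∑ l, a i l ^ 2

lemma sum_rowSqSum_sub_le {κ : Type*} [Fintype κ] (a : κ → Matrix ι ι ℝ) {R : ℝ}
    (hR : ∀ k, ∑ α, (∑ l, a α k l ^ 2 - (a α).trace * a α k k) ≤ R) (J : Finset ι) :
    ∑ α, (rowSqSum (a α) J - (a α).trace * ∑ j ∈ J, a α j j) ≤ #J * R := by
  calc ∑ α, (rowSqSum (a α) J - (a α).trace * ∑ j ∈ J, a α j j)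
      = ∑ j ∈ J, ∑ α, (∑ l, a α j l ^ 2 - (a α).trace * a α j j) := by
        simp only [rowSqSum, mul_sum, ← sum_sub_distrib]
        exact sum_comm
    _ ≤ #J * R := by
        simpa using sum_le_card_nsmul J _ R fun k _ => hR k

variable [DecidableEq ι]

def crossSqSum (a : Matrix ι ι ℝ) (I : Finset ι) : ℝ := ∑ i ∈ I, ∑ j ∈ Iᶜ, a i j ^ 2

lemma crossSqSum_nonneg (a : Matrix ι ι ℝ) (I : Finset ι) : 0 ≤ crossSqSum a I :=
  sum_nonneg fun _ _ => sum_nonneg fun _ _ => sq_nonneg _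

lemma rowSqSum_eq (a : Matrix ι ι ℝ) (I : Finset ι) :
    rowSqSum a I = ∑ i ∈ I, ∑ l ∈ I, a i l ^ 2 + crossSqSum a I := by
  simp only [rowSqSum, crossSqSum, ← sum_add_distrib, sum_add_sum_compl]

lemma IsSymm.crossSqSum_compl {a : Matrix ι ι ℝ} (ha : a.IsSymm) (I : Finset ι) :
    crossSqSum a Iᶜ = crossSqSum a I := by
  rw [crossSqSum, crossSqSum, compl_compl, sum_comm]
  exact sum_congr rfl fun i _ => sum_congr rfl fun j _ => by rw [ha.apply]

lemma sq_sum_diag_le (a : Matrix ι ι ℝ) (I : Finset ι) :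
    (∑ i ∈ I, a i i) ^ 2 ≤ #I * (rowSqSum a I - crossSqSum a I) := by
  rw [rowSqSum_eq, add_sub_cancel_right]
  refine sq_sum_le_card_mul_sum_sq.trans (mul_le_mul_of_nonneg_left ?_ (Nat.cast_nonneg _))
  exact sum_le_sum fun i hi => single_le_sum (f := fun l => a i l ^ 2) (fun _ _ => sq_nonneg _) hi

lemma IsSymm.cross_le_lsWeight_combination {a : Matrix ι ι ℝ} (ha : a.IsSymm) {I : Finset ι}
    (hI : 2 ≤ #I) (hIc : 2 ≤ #Iᶜ) :
    (#I + #Iᶜ : ℝ) ^ 2 * (#I + #Iᶜ - 2) *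
        ∑ i ∈ I, ∑ j ∈ Iᶜ, (2 * a i j ^ 2 - a i i * a j j) ≤
      lsWeight #I #Iᶜ * (rowSqSum a I - a.trace * ∑ i ∈ I, a i i)
        + lsWeight #Iᶜ #I * (rowSqSum a Iᶜ - a.trace * ∑ j ∈ Iᶜ, a j j)
        + #I * #Iᶜ * (#I + #Iᶜ - 2 : ℝ) ^ 2 * a.trace ^ 2 := by
  have htr : a.trace = ∑ i ∈ I, a i i + ∑ j ∈ Iᶜ, a j j := (sum_add_sum_compl I _).symm
  have hcross : ∑ i ∈ I, ∑ j ∈ Iᶜ, (2 * a i j ^ 2 - a i i * a j j) =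
      2 * crossSqSum a I - (∑ i ∈ I, a i i) * ∑ j ∈ Iᶜ, a j j := by
    rw [sum_mul_sum, crossSqSum, mul_sum]
    simp only [mul_sum, ← sum_sub_distrib]
  have hdiagc := sq_sum_diag_le a Iᶜ
  rw [ha.crossSqSum_compl] at hdiagc
  rw [hcross, htr]
  exact le_lsWeight_combination (by exact_mod_cast hI) (by exact_mod_cast hIc)
    (crossSqSum_nonneg a I) (sq_sum_diag_le a I) hdiagc

theorem IsSymm.sum_cross_le {κ : Type*} [Fintype κ] {a : κ → Matrix ι ι ℝ}
    (ha : ∀ α, (a α).IsSymm) {I : Finset ι} (hI : 2 ≤ #I) (hIc : 2 ≤ #Iᶜ) {R : ℝ}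
    (hR : ∀ k, ∑ α, (∑ l, a α k l ^ 2 - (a α).trace * a α k k) ≤ R) :
    (Fintype.card ι : ℝ) ^ 2 *
        ∑ i ∈ I, ∑ j ∈ Iᶜ, (2 * ∑ α, a α i j ^ 2 - ∑ α, a α i i * a α j j) ≤
      #I * #Iᶜ * ((Fintype.card ι : ℝ) ^ 2 * R + (Fintype.card ι - 2) * ∑ α, (a α).trace ^ 2) := by
  have hN : (Fintype.card ι : ℝ) = #I + #Iᶜ := by exact_mod_cast (card_add_card_compl I).symm
  have hswap : ∑ i ∈ I, ∑ j ∈ Iᶜ, (2 * ∑ α, a α i j ^ 2 - ∑ α, a α i i * a α j j) =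
      ∑ α, ∑ i ∈ I, ∑ j ∈ Iᶜ, (2 * a α i j ^ 2 - a α i i * a α j j) := by
    simp only [mul_sum, ← sum_sub_distrib]
    exact (sum_congr rfl fun i _ => sum_comm).trans sum_comm
  have hI' : (2 : ℝ) ≤ #I := by exact_mod_cast hI
  have hIc' : (2 : ℝ) ≤ #Iᶜ := by exact_mod_cast hIc
  rw [hN, hswap]
  refine le_of_mul_le_mul_left ?_ (by linarith : (0 : ℝ) < #I + #Iᶜ - 2)
  calc (#I + #Iᶜ - 2 : ℝ) * ((#I + #Iᶜ) ^ 2 *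
          ∑ α, ∑ i ∈ I, ∑ j ∈ Iᶜ, (2 * a α i j ^ 2 - a α i i * a α j j))
      = ∑ α, (#I + #Iᶜ : ℝ) ^ 2 * (#I + #Iᶜ - 2) *
          ∑ i ∈ I, ∑ j ∈ Iᶜ, (2 * a α i j ^ 2 - a α i i * a α j j) := by
        rw [← mul_assoc, mul_comm (_ - 2), mul_sum]
    _ ≤ ∑ α, (lsWeight #I #Iᶜ * (rowSqSum (a α) I - (a α).trace * ∑ i ∈ I, a α i i)
          + lsWeight #Iᶜ #I * (rowSqSum (a α) Iᶜ - (a α).trace * ∑ j ∈ Iᶜ, a α j j)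
          + #I * #Iᶜ * (#I + #Iᶜ - 2 : ℝ) ^ 2 * (a α).trace ^ 2) :=
        sum_le_sum fun α _ => (ha α).cross_le_lsWeight_combination hI hIc
    _ = lsWeight #I #Iᶜ * ∑ α, (rowSqSum (a α) I - (a α).trace * ∑ i ∈ I, a α i i)
          + lsWeight #Iᶜ #I * ∑ α, (rowSqSum (a α) Iᶜ - (a α).trace * ∑ j ∈ Iᶜ, a α j j)
          + #I * #Iᶜ * (#I + #Iᶜ - 2 : ℝ) ^ 2 * ∑ α, (a α).trace ^ 2 := by
        simp only [sum_add_distrib, mul_sum]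
    _ ≤ lsWeight #I #Iᶜ * (#I * R) + lsWeight #Iᶜ #I * (#Iᶜ * R)
          + #I * #Iᶜ * (#I + #Iᶜ - 2 : ℝ) ^ 2 * ∑ α, (a α).trace ^ 2 := by
        gcongr
        · exact lsWeight_nonneg (by positivity) (by linarith)
        · exact sum_rowSqSum_sub_le a hR I
        · exact lsWeight_nonneg (by positivity) (by linarith)
        · exact sum_rowSqSum_sub_le a hR Iᶜ
    _ = (#I + #Iᶜ - 2 : ℝ) * (#I * #Iᶜ *
          ((#I + #Iᶜ) ^ 2 * R + (#I + #Iᶜ - 2) * ∑ α, (a α).trace ^ 2)) := by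
        linear_combination R * lsWeight_mul_add (#I : ℝ) (#Iᶜ : ℝ)

end Matrix

namespace OrthonormalBasis

variable {ι V : Type*} [Fintype ι] [NormedAddCommGroup V] [InnerProductSpace ℝ V]

noncomputable def innerMatrix (e : OrthonormalBasis ι ℝ V) (T : V →ₗ[ℝ] V) : Matrix ι ι ℝ :=
  Matrix.of fun i j => ⟪T (e i), e j⟫

lemma trace_innerMatrix (e : OrthonormalBasis ι ℝ V) (T : V →ₗ[ℝ] V) :
    (e.innerMatrix T).trace = LinearMap.trace ℝ V T := by
  rw [LinearMap.trace_eq_sum_inner T e]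
  exact sum_congr rfl fun i _ => real_inner_comm _ _

lemma isSymm_innerMatrix (e : OrthonormalBasis ι ℝ V) {T : V →ₗ[ℝ] V} (hT : T.IsSymmetric) :
    (e.innerMatrix T).IsSymm :=
  Matrix.IsSymm.ext fun i j => by
    change ⟪T (e j), e i⟫ = ⟪T (e i), e j⟫
    rw [hT, real_inner_comm]

lemma sum_sq_innerMatrix_apply (e : OrthonormalBasis ι ℝ V) (T : V →ₗ[ℝ] V) (k : ι) :
    ∑ l, e.innerMatrix T k l ^ 2 = ‖T (e k)‖ ^ 2 :=
  e.sum_sq_inner_left _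

end OrthonormalBasis

theorem ricci_lower_bound_theta_estimate_general {V : Type*} [NormedAddCommGroup V] [InnerProductSpace ℝ V]
    (n m : ℕ)
    (A : Fin m → V →ₗ[ℝ] V) (hsymm : ∀ α : Fin m, (A α).IsSymmetric)
    (c H : ℝ)
    (hHdef : (n : ℝ) ^ 2 * H ^ 2 = ∑ α : Fin m, (LinearMap.trace ℝ V (A α)) ^ 2)
    (r : ℝ)
    (hRic : ∀ X : V, ‖X‖ = 1 → RicCurv m n c A X ≥ r) :
    ∀ p : ℕ, 2 ≤ p → 2 * p ≤ n → ∀ e : OrthonormalBasis (Fin n) ℝ V,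
      Theta m p A e ≤
        (p : ℝ) * ((n : ℝ) - p) * (((n : ℝ) - 1) * (c + H ^ 2) - r - H ^ 2) := by
  intro p hp hpn e
  set I : Finset (Fin n) := univ.filter fun i => (i : ℕ) < p
  have hIc : Iᶜ = univ.filter fun j : Fin n => p ≤ (j : ℕ) := by ext; simp [I]
  have hcard : #I = p := by simp only [I, Fin.card_filter_val_lt]; omega
  have hcardc : #Iᶜ = n - p := by rw [card_compl, Fintype.card_fin, hcard]
  have hR (k : Fin n) : ∑ α, (∑ l, e.innerMatrix (A α) k l ^ 2
      - (e.innerMatrix (A α)).trace * e.innerMatrix (A α) k k) ≤ (n - 1) * c - r := by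
    have := hRic (e k) (e.orthonormal.1 k)
    simp only [RicCurv] at this
    simp only [sum_sub_distrib, e.sum_sq_innerMatrix_apply, e.trace_innerMatrix]
    simp only [OrthonormalBasis.innerMatrix, Matrix.of_apply]
    linarith
  have key := Matrix.IsSymm.sum_cross_le (fun α => e.isSymm_innerMatrix (hsymm α))
    (by omega : 2 ≤ #I) (by omega : 2 ≤ #Iᶜ) hR
  simp only [e.trace_innerMatrix, ← hHdef, Fintype.card_fin, hcard, hcardc,
    Nat.cast_sub (by omega : p ≤ n)] at key
  rw [hIc] at key
  have hn : (0 : ℝ) < n := by exact_mod_cast (by omega : 0 < n)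
  unfold Theta
  refine le_of_mul_le_mul_left (key.trans_eq ?_) (by positivity : (0 : ℝ) < n ^ 2)
  ring

theorem ricci_lower_bound_theta_estimate {V : Type*} [NormedAddCommGroup V] [InnerProductSpace ℝ V]
    [FiniteDimensional ℝ V] (n m : ℕ)
    (hdim : Module.finrank ℝ V = n)
    (A : Fin m → V →ₗ[ℝ] V) (hsymm : ∀ α : Fin m, (A α).IsSymmetric)
    (c H : ℝ) (hH : 0 ≤ H)
    (hHdef : (n : ℝ) ^ 2 * H ^ 2 = ∑ α : Fin m, (LinearMap.trace ℝ V (A α)) ^ 2)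
    (r : ℝ)
    (hRic : ∀ X : V, ‖X‖ = 1 → RicCurv m n c A X ≥ r) :
    ∀ p : ℕ, 2 ≤ p → 2 * p ≤ n → ∀ e : OrthonormalBasis (Fin n) ℝ V,
      Theta m p A e ≤
        (p : ℝ) * ((n : ℝ) - p) * (((n : ℝ) - 1) * (c + H ^ 2) - r - H ^ 2) :=
  ricci_lower_bound_theta_estimate_general n m A hsymm c H hHdef r hRic
end

section
/- Let V, A_1,…,A_m, c, n, H, Ric, Θ_p, T_p be as in the setting. Then for every integer p with 2 ≤ p ≤ n−1 and every orthonormal basis e_1,…,e_n of V one has Θ_p ≤ p·Σ_{i=1}^p((n−1)(c+H²) − Ric(e_i)) − p(n−p)H² + (p−1)(T_p − p n H²). (The first estimate (5) in the proof of Proposition 2; note that n H Σ_{i=1}^p ⟨(A_1 − H·Id)e_i, e_i⟩ = T_p − p n H² when the normal frame is chosen with ξ_1 along the mean curvature vector.) -/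
/-!
The constants `c` and `H` cancel: by the Gauss equation the right-hand side equals
`Σ_α (p Σ_{i≤p} ‖A_α e_i‖² − tr A_α Σ_{i≤p} ⟨A_α e_i, e_i⟩)`. With `a_ij = ⟨A_α e_i, e_j⟩`,
`‖A_α e_i‖² = Σ_j a_ij²` and `tr A_α = Σ_{i≤p} a_ii + Σ_{j>p} a_jj`, the estimate for each `α`
becomes `(Σ_{i≤p} a_ii)² + 2 Σ_{i≤p<j} a_ij² ≤ p Σ_{i≤p} Σ_j a_ij²`, which is Cauchy–Schwarz for
the diagonal block together with `p ≥ 2`.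
-/

open scoped RealInnerProductSpace

open Finset LinearMap

theorem Fin.card_filter_val_lt_of_le {n p : ℕ} (h : p ≤ n) :
    #(univ.filter fun i : Fin n => (i : ℕ) < p) = p := by
  simp [Fin.card_filter_val_lt, h]

section

variable {V : Type*} [NormedAddCommGroup V] [InnerProductSpace ℝ V]

section BlockEstimate

variable {ι : Type*} [Fintype ι] [DecidableEq ι]

theorem sq_sum_diag_add_two_mul_sum_sq_offDiag_le (a : ι → ι → ℝ) {s : Finset ι} (hs : 2 ≤ #s) :
    (∑ i ∈ s, a i i) ^ 2 + 2 * ∑ i ∈ s, ∑ j ∈ sᶜ, a i j ^ 2 ≤ #s * ∑ i ∈ s, ∑ j, a i j ^ 2 := by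
  have hdiag : (∑ i ∈ s, a i i) ^ 2 ≤ #s * ∑ i ∈ s, ∑ j ∈ s, a i j ^ 2 :=
    calc (∑ i ∈ s, a i i) ^ 2 ≤ #s * ∑ i ∈ s, a i i ^ 2 := sq_sum_le_card_mul_sum_sq
      _ ≤ #s * ∑ i ∈ s, ∑ j ∈ s, a i j ^ 2 := by
        gcongr with i hi
        exact single_le_sum (f := fun j => a i j ^ 2) (fun _ _ => sq_nonneg _) hi
  have hsplit : ∑ i ∈ s, ∑ j, a i j ^ 2
      = ∑ i ∈ s, ∑ j ∈ s, a i j ^ 2 + ∑ i ∈ s, ∑ j ∈ sᶜ, a i j ^ 2 := by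
    simp_rw [← sum_add_distrib, sum_add_sum_compl]
  have hoff : 0 ≤ ∑ i ∈ s, ∑ j ∈ sᶜ, a i j ^ 2 := by positivity
  have hs' : (2 : ℝ) ≤ #s := by exact_mod_cast hs
  rw [hsplit]
  linear_combination hdiag + mul_nonneg (sub_nonneg.2 hs') hoff

theorem two_mul_sum_sq_inner_offDiag_sub_le (T : V →ₗ[ℝ] V) (e : OrthonormalBasis ι ℝ V)
    {s : Finset ι} (hs : 2 ≤ #s) :
    2 * ∑ i ∈ s, ∑ j ∈ sᶜ, ⟪T (e i), e j⟫ ^ 2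
        - (∑ i ∈ s, ⟪T (e i), e i⟫) * ∑ j ∈ sᶜ, ⟪T (e j), e j⟫
      ≤ #s * ∑ i ∈ s, ‖T (e i)‖ ^ 2 - trace ℝ V T * ∑ i ∈ s, ⟪T (e i), e i⟫ := by
  have htrace : trace ℝ V T = ∑ i ∈ s, ⟪T (e i), e i⟫ + ∑ j ∈ sᶜ, ⟪T (e j), e j⟫ := by
    rw [trace_eq_sum_inner T e, sum_add_sum_compl]
    simp_rw [real_inner_comm]
  have hnorm (i : ι) : ‖T (e i)‖ ^ 2 = ∑ j, ⟪T (e i), e j⟫ ^ 2 := by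
    rw [← e.sum_sq_inner_right]
    simp_rw [real_inner_comm]
  simp only [hnorm, htrace]
  linear_combination sq_sum_diag_add_two_mul_sum_sq_offDiag_le (fun i j => ⟪T (e i), e j⟫) hs

end BlockEstimate

theorem theta_le_sum_sq_norm_sub_tsum {m n p : ℕ} (hp : 2 ≤ p) (hpn : p ≤ n)
    (A : Fin m → V →ₗ[ℝ] V) (e : OrthonormalBasis (Fin n) ℝ V) :
    Theta m p A e ≤ p * ∑ α, ∑ i ∈ univ.filter (fun i : Fin n => (i : ℕ) < p),
      ‖A α (e i)‖ ^ 2 - Tsum m p A e := by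
  set s := univ.filter fun i : Fin n => (i : ℕ) < p
  have hcompl : univ.filter (fun j : Fin n => p ≤ (j : ℕ)) = sᶜ := by
    ext j; simp [s]
  have hcard : #s = p := Fin.card_filter_val_lt_of_le hpn
  have hTheta : Theta m p A e = ∑ α, (2 * ∑ i ∈ s, ∑ j ∈ sᶜ, ⟪A α (e i), e j⟫ ^ 2
      - (∑ i ∈ s, ⟪A α (e i), e i⟫) * ∑ j ∈ sᶜ, ⟪A α (e j), e j⟫) := by
    rw [Theta, hcompl]
    simp_rw [sum_mul_sum, mul_sum, ← sum_sub_distrib]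
    exact (sum_congr rfl fun i _ => sum_comm).trans sum_comm
  rw [hTheta, Tsum, mul_sum, ← sum_sub_distrib]
  refine sum_le_sum fun α _ => ?_
  have hα := two_mul_sum_sq_inner_offDiag_sub_le (A α) e (s := s) (hcard ▸ hp)
  rw [hcard] at hα
  exact hα

theorem sum_sub_ricCurv {ι : Type*} (m n : ℕ) (c H : ℝ) (A : Fin m → V →ₗ[ℝ] V) (e : ι → V)
    (s : Finset ι) :
    ∑ i ∈ s, (((n : ℝ) - 1) * (c + H ^ 2) - RicCurv m n c A (e i))
      = #s * ((n : ℝ) - 1) * H ^ 2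
        - ∑ α, trace ℝ V (A α) * ∑ i ∈ s, ⟪A α (e i), e i⟫ + ∑ α, ∑ i ∈ s, ‖A α (e i)‖ ^ 2 := by
  simp only [RicCurv, sum_sub_distrib, sum_add_distrib, sum_const, nsmul_eq_mul, mul_sum]
  rw [sum_comm (s := s) (t := univ), sum_comm (s := s) (t := univ)]
  ring

end

theorem theta_first_estimate_general {V : Type*} [NormedAddCommGroup V] [InnerProductSpace ℝ V]
    (n m : ℕ)
    (A : Fin m → V →ₗ[ℝ] V)
    (c H : ℝ) :
    ∀ p : ℕ, 2 ≤ p → p ≤ n - 1 → ∀ e : OrthonormalBasis (Fin n) ℝ V,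
      Theta m p A e ≤
        (p : ℝ) * (∑ i ∈ Finset.univ.filter (fun i : Fin n => (i : ℕ) < p),
            (((n : ℝ) - 1) * (c + H ^ 2) - RicCurv m n c A (e i)))
          - (p : ℝ) * ((n : ℝ) - p) * H ^ 2
          + ((p : ℝ) - 1) * (Tsum m p A e - (p : ℝ) * (n : ℝ) * H ^ 2) := by
  intro p hp hpn e
  have hpn' : p ≤ n := by omega
  calc Theta m p A e
      ≤ p * ∑ α, ∑ i ∈ univ.filter (fun i : Fin n => (i : ℕ) < p), ‖A α (e i)‖ ^ 2
          - Tsum m p A e := theta_le_sum_sq_norm_sub_tsum hp hpn' A e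
    _ = _ := by
      rw [sum_sub_ricCurv, Fin.card_filter_val_lt_of_le hpn', Tsum]
      ring

theorem theta_first_estimate {V : Type*} [NormedAddCommGroup V] [InnerProductSpace ℝ V]
    [FiniteDimensional ℝ V] (n m : ℕ)
    (hdim : Module.finrank ℝ V = n)
    (A : Fin m → V →ₗ[ℝ] V) (hsymm : ∀ α : Fin m, (A α).IsSymmetric)
    (c H : ℝ) (hH : 0 ≤ H)
    (hHdef : (n : ℝ) ^ 2 * H ^ 2 = ∑ α : Fin m, (LinearMap.trace ℝ V (A α)) ^ 2) :
    ∀ p : ℕ, 2 ≤ p → p ≤ n - 1 → ∀ e : OrthonormalBasis (Fin n) ℝ V,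
      Theta m p A e ≤
        (p : ℝ) * (∑ i ∈ Finset.univ.filter (fun i : Fin n => (i : ℕ) < p),
            (((n : ℝ) - 1) * (c + H ^ 2) - RicCurv m n c A (e i)))
          - (p : ℝ) * ((n : ℝ) - p) * H ^ 2
          + ((p : ℝ) - 1) * (Tsum m p A e - (p : ℝ) * (n : ℝ) * H ^ 2) :=
  theta_first_estimate_general n m A c H
end

section
/- Let V, A_1,…,A_m, c, n, H, Ric be as in the setting, with n ≥ 4. Assume Ric(X) ≥ (n(n−1)/(n+2))(c+H²) for every unit vector X ∈ V. Then for every orthonormal basis e_1,…,e_n of V, Σ_{j=2}^n (2·Σ_{α=1}^m ⟨A_α e_1, e_j⟩² − Σ_{α=1}^m ⟨A_α e_1, e_1⟩⟨A_α e_j, e_j⟩) ≤ (n−1)c. (Pointwise estimate in the proof of Lemma 3, verifying the Lawson–Simons condition for p = 1.) -/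
/-
Write `h_α(i, j) = ⟪A_α e_i, e_j⟫`, `τ_α = tr A_α` and `s_α = τ_α - h_α(i₀, i₀)`. The Ricci bound at
`e_{i₀}`, and the Ricci bounds at the other `e_i` summed (keeping only the entries `h_α(i, i₀)` and
`h_α(i, i)` of each row), are two linear inequalities in the quantities `Σ τ_α s_α`, `Σ s_α²`,
`Σ_{j ≠ i₀} h_α(i₀, j)²` and `Σ_{j ≠ i₀} h_α(j, j)²`. Three times the first plus the second, together
with `2 τ s ≤ s² + Σ_{j ≠ i₀} h(j, j)² + (n - 1)/n τ²` (Cauchy–Schwarz for `s = Σ_{j ≠ i₀} h(j, j)`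
and the square `((n - 1) τ - n s)² ≥ 0`), gives the estimate.
-/

open scoped RealInnerProductSpace

open Finset

lemma two_mul_mul_le_of_sq_le {N t s D : ℝ} (hN : 1 < N) (hsD : s ^ 2 ≤ (N - 1) * D) :
    2 * t * s ≤ s ^ 2 + D + (N - 1) / N * t ^ 2 := by
  have hN0 : 0 < N := by linarith
  have key : N * (N - 1) * (s ^ 2 + D + (N - 1) / N * t ^ 2 - 2 * t * s)
      = ((N - 1) * t - N * s) ^ 2 + N * ((N - 1) * D - s ^ 2) := by
    field_simp
    ring
  rw [← sub_nonneg, ← mul_nonneg_iff_of_pos_left (mul_pos hN0 (sub_pos.2 hN)), key]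
  exact add_nonneg (sq_nonneg _) (mul_nonneg hN0.le (sub_nonneg.2 hsD))

lemma Matrix.sum_erase_diag_eq_trace_sub {ι : Type*} [Fintype ι] [DecidableEq ι]
    (M : Matrix ι ι ℝ) (i : ι) : ∑ j ∈ univ.erase i, M j j = M.trace - M i i := by
  rw [Matrix.trace, ← add_sum_erase univ _ (mem_univ i)]
  simp only [Matrix.diag_apply, add_sub_cancel_left]

lemma cast_card_univ_erase {ι : Type*} [Fintype ι] [DecidableEq ι] (i : ι) :
    ((univ.erase i).card : ℝ) = Fintype.card ι - 1 := by
  rw [card_erase_of_mem (mem_univ _), card_univ, Nat.cast_pred (Fintype.card_pos_iff.2 ⟨i⟩)]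

section Coefficients

variable {κ ι : Type*} [Fintype κ] [Fintype ι] (h : κ → Matrix ι ι ℝ)

/-- `Ric(e_i) - (n - 1) c` by the Gauss equation, in the coefficients
`h α i j = ⟪A_α e_i, e_j⟫` of the shape operators. -/
noncomputable def gaussRicci (i : ι) : ℝ :=
  ∑ α, (h α).trace * h α i i - ∑ α, ∑ j, h α i j ^ 2

variable [DecidableEq ι] (i₀ : ι)

lemma gaussRicci_eq_of_self :
    gaussRicci h i₀ = ∑ α, (h α).trace * ((h α).trace - h α i₀ i₀)
      - ∑ α, ((h α).trace - h α i₀ i₀) ^ 2 - ∑ α, ∑ j ∈ univ.erase i₀, h α i₀ j ^ 2 := by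
  rw [gaussRicci, ← sum_sub_distrib, ← sum_sub_distrib, ← sum_sub_distrib]
  refine sum_congr rfl fun α _ => ?_
  rw [← add_sum_erase univ _ (mem_univ i₀)]
  ring

lemma sum_erase_lawsonSimons_eq :
    ∑ j ∈ univ.erase i₀, (2 * ∑ α, h α i₀ j ^ 2 - ∑ α, h α i₀ i₀ * h α j j)
      = 2 * ∑ α, ∑ j ∈ univ.erase i₀, h α i₀ j ^ 2 - (∑ α, (h α).trace * ((h α).trace - h α i₀ i₀)
        - ∑ α, ((h α).trace - h α i₀ i₀) ^ 2) := by
  rw [sum_sub_distrib, ← mul_sum, sum_comm, sum_comm (s := univ.erase i₀), ← sum_sub_distrib]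
  simp only [← mul_sum, Matrix.sum_erase_diag_eq_trace_sub]
  congr 1
  exact sum_congr rfl fun α _ => by ring

variable {h i₀}

lemma gaussRicci_le_of_ne (hsymm : ∀ α, (h α).IsSymm) {i : ι} (hi : i ≠ i₀) :
    gaussRicci h i ≤ ∑ α, (h α).trace * h α i i - ∑ α, (h α i₀ i ^ 2 + h α i i ^ 2) := by
  refine sub_le_sub_left (sum_le_sum fun α _ => ?_) _
  have hpair : ∑ j ∈ {i₀, i}, h α i j ^ 2 ≤ ∑ j, h α i j ^ 2 :=
    sum_le_sum_of_subset_of_nonneg (subset_univ _) fun j _ _ => sq_nonneg _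
  rwa [sum_pair hi.symm, (hsymm α).apply i₀ i] at hpair

lemma sum_gaussRicci_erase_le (hsymm : ∀ α, (h α).IsSymm) :
    ∑ i ∈ univ.erase i₀, gaussRicci h i ≤ ∑ α, (h α).trace * ((h α).trace - h α i₀ i₀)
      - ∑ α, ∑ j ∈ univ.erase i₀, h α i₀ j ^ 2 - ∑ α, ∑ j ∈ univ.erase i₀, h α j j ^ 2 := by
  refine (sum_le_sum fun i hi => gaussRicci_le_of_ne hsymm (ne_of_mem_erase hi)).trans_eq ?_
  simp only [sum_sub_distrib, sum_add_distrib]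
  simp only [sum_comm (s := univ.erase i₀), ← mul_sum, Matrix.sum_erase_diag_eq_trace_sub, sub_sub]

lemma two_mul_sum_trace_mul_le (hn : 1 < Fintype.card ι) :
    2 * ∑ α, (h α).trace * ((h α).trace - h α i₀ i₀)
      ≤ ∑ α, ((h α).trace - h α i₀ i₀) ^ 2 + ∑ α, ∑ j ∈ univ.erase i₀, h α j j ^ 2
        + (Fintype.card ι - 1) / Fintype.card ι * ∑ α, (h α).trace ^ 2 := by
  simp only [mul_sum, ← sum_add_distrib, ← mul_assoc]
  refine sum_le_sum fun α _ => two_mul_mul_le_of_sq_le (by exact_mod_cast hn) ?_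
  rw [← cast_card_univ_erase, ← Matrix.sum_erase_diag_eq_trace_sub]
  exact sq_sum_le_card_mul_sum_sq

theorem sum_erase_lawsonSimons_le (hsymm : ∀ α, (h α).IsSymm) (hn : 1 < Fintype.card ι)
    {c H : ℝ} (hH : (Fintype.card ι : ℝ) ^ 2 * H ^ 2 = ∑ α, (h α).trace ^ 2)
    (hRic : ∀ i, (Fintype.card ι : ℝ) * (Fintype.card ι - 1) / (Fintype.card ι + 2) * (c + H ^ 2)
      ≤ (Fintype.card ι - 1) * c + gaussRicci h i) :
    ∑ j ∈ univ.erase i₀, (2 * ∑ α, h α i₀ j ^ 2 - ∑ α, h α i₀ i₀ * h α j j)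
      ≤ (Fintype.card ι - 1) * c := by
  have hN : (1 : ℝ) < Fintype.card ι := by exact_mod_cast hn
  set N : ℝ := (Fintype.card ι : ℝ)
  set ℓ := N * (N - 1) / (N + 2) * (c + H ^ 2)
  have hℓ : (N + 2) * ℓ = N * (N - 1) * (c + H ^ 2) := by
    simp only [ℓ]
    field_simp
  have hP : (N - 1) / N * ∑ α, (h α).trace ^ 2 = N * (N - 1) * H ^ 2 := by
    rw [← hH]
    field_simp
  have hself := hRic i₀
  rw [gaussRicci_eq_of_self] at hself
  have hrest : (N - 1) * ℓ ≤ (N - 1) * ((N - 1) * c) + ∑ i ∈ univ.erase i₀, gaussRicci h i := by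
    have := card_nsmul_le_sum (univ.erase i₀) _ ℓ fun i _ => hRic i
    rwa [sum_add_distrib, sum_const, nsmul_eq_mul, nsmul_eq_mul, cast_card_univ_erase] at this
  have hbound := sum_gaussRicci_erase_le (i₀ := i₀) hsymm
  have hsq := two_mul_sum_trace_mul_le (h := h) (i₀ := i₀) hn
  rw [sum_erase_lawsonSimons_eq]
  linarith

end Coefficients

section InnerProductSpace

variable {ι V : Type*} [Fintype ι] [NormedAddCommGroup V] [InnerProductSpace ℝ V]
  (e : OrthonormalBasis ι ℝ V)

noncomputable def innerMatrix (T : V →ₗ[ℝ] V) : Matrix ι ι ℝ :=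
  Matrix.of fun i j => ⟪T (e i), e j⟫

lemma trace_innerMatrix (T : V →ₗ[ℝ] V) : (innerMatrix e T).trace = LinearMap.trace ℝ V T := by
  simp only [T.trace_eq_sum_inner e, Matrix.trace, Matrix.diag, innerMatrix, Matrix.of_apply,
    real_inner_comm]

lemma isSymm_innerMatrix {T : V →ₗ[ℝ] V} (hT : T.IsSymmetric) : (innerMatrix e T).IsSymm :=
  Matrix.IsSymm.ext fun i j => by
    rw [innerMatrix, Matrix.of_apply, Matrix.of_apply, hT, real_inner_comm]

lemma ricCurv_apply_basis {m : ℕ} (n : ℕ) (c : ℝ) (A : Fin m → V →ₗ[ℝ] V) (i : ι) :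
    RicCurv m n c A (e i) = ((n : ℝ) - 1) * c + gaussRicci (fun α => innerMatrix e (A α)) i := by
  simp only [RicCurv, gaussRicci, trace_innerMatrix]
  simp only [innerMatrix, Matrix.of_apply, e.sum_sq_inner_left]
  ring

end InnerProductSpace

theorem lemma_three_estimate {V : Type*} [NormedAddCommGroup V] [InnerProductSpace ℝ V]
    (n m : ℕ)
    (A : Fin m → V →ₗ[ℝ] V) (hsymm : ∀ α : Fin m, (A α).IsSymmetric)
    (c H : ℝ)
    (hHdef : (n : ℝ) ^ 2 * H ^ 2 = ∑ α : Fin m, (LinearMap.trace ℝ V (A α)) ^ 2)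
    (hn : 4 ≤ n)
    (hRic : ∀ X : V, ‖X‖ = 1 →
      RicCurv m n c A X ≥ (n : ℝ) * ((n : ℝ) - 1) / ((n : ℝ) + 2) * (c + H ^ 2)) :
    ∀ e : OrthonormalBasis (Fin n) ℝ V,
      ∑ j ∈ Finset.univ.filter (fun j : Fin n => 1 ≤ (j : ℕ)),
        (2 * ∑ α : Fin m, ⟪(A α) (e ⟨0, by omega⟩), e j⟫ ^ 2
          - ∑ α : Fin m, ⟪(A α) (e ⟨0, by omega⟩), e ⟨0, by omega⟩⟫ * ⟪(A α) (e j), e j⟫)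
      ≤ ((n : ℝ) - 1) * c := by
  intro e
  have hfilter : univ.filter (fun j : Fin n => 1 ≤ (j : ℕ)) = univ.erase ⟨0, by omega⟩ := by
    ext j
    simp only [mem_filter, mem_univ, true_and, mem_erase, ne_eq, Fin.ext_iff, and_true]
    omega
  rw [hfilter]
  have key := sum_erase_lawsonSimons_le (h := fun α => innerMatrix e (A α)) (i₀ := ⟨0, by omega⟩)
    (fun α => isSymm_innerMatrix e (hsymm α)) (by rw [Fintype.card_fin]; omega) (c := c) (H := H)
    (by simpa only [Fintype.card_fin, trace_innerMatrix] using hHdef)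
    (fun i => by simpa only [Fintype.card_fin, ricCurv_apply_basis] using hRic _ (e.norm_eq_one i))
  simpa only [Fintype.card_fin, innerMatrix, Matrix.of_apply] using key
end

section
/- Let V, A_1,…,A_m, c, n, H, S, Ric be as in the setting, with n ≥ 2. Assume Ric(X) ≥ (n(n−1)/(n+2))(c+H²) for every unit vector X ∈ V. Then S − nH² ≤ (2n(n−1)/(n+2))(c+H²). (Inequality (19) in the proof of Lemma 3; S − nH² is the squared length of the traceless second fundamental form.) -/
open scoped RealInnerProductSpace

lemma LinearMap.IsSymmetric.trace_comp_self_eq_sum_norm_sq {V ι : Type*} [Fintype ι]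
    [NormedAddCommGroup V] [InnerProductSpace ℝ V] {T : V →ₗ[ℝ] V} (hT : T.IsSymmetric)
    (b : OrthonormalBasis ι ℝ V) :
    LinearMap.trace ℝ V (T ∘ₗ T) = ∑ i, ‖T (b i)‖ ^ 2 := by
  rw [LinearMap.trace_eq_sum_inner _ b]
  refine Fintype.sum_congr _ _ fun i => ?_
  rw [LinearMap.comp_apply, ← hT, real_inner_self_eq_norm_sq]

lemma sum_ricCurv_orthonormalBasis {V ι : Type*} [Fintype ι] [NormedAddCommGroup V]
    [InnerProductSpace ℝ V] (m n : ℕ) (c : ℝ) (A : Fin m → V →ₗ[ℝ] V)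
    (hA : ∀ α, (A α).IsSymmetric) (b : OrthonormalBasis ι ℝ V) :
    ∑ i, RicCurv m n c A (b i)
      = Fintype.card ι * ((n - 1) * c) + ∑ α, LinearMap.trace ℝ V (A α) ^ 2 - Ssec m A := by
  have hmean : ∀ α, ∑ i, LinearMap.trace ℝ V (A α) * ⟪A α (b i), b i⟫
      = LinearMap.trace ℝ V (A α) ^ 2 := fun α => by
    rw [← Finset.mul_sum, sq]
    congr 1
    rw [LinearMap.trace_eq_sum_inner _ b]
    exact Fintype.sum_congr _ _ fun i => real_inner_comm _ _
  have hnorm : ∀ α, ∑ i, ‖A α (b i)‖ ^ 2 = LinearMap.trace ℝ V (A α ∘ₗ A α) := fun α =>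
    ((hA α).trace_comp_self_eq_sum_norm_sq b).symm
  simp only [RicCurv, Ssec, Finset.sum_sub_distrib, Finset.sum_add_distrib, Finset.sum_const,
    Finset.card_univ, nsmul_eq_mul]
  rw [Finset.sum_comm, Finset.sum_comm (γ := ι)]
  simp only [hmean, hnorm]

theorem traceless_second_fundamental_form_bound_general {V : Type*} [NormedAddCommGroup V] [InnerProductSpace ℝ V]
    [FiniteDimensional ℝ V] (n m : ℕ)
    (hdim : Module.finrank ℝ V = n)
    (A : Fin m → V →ₗ[ℝ] V) (hsymm : ∀ α : Fin m, (A α).IsSymmetric)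
    (c H : ℝ)
    (hHdef : (n : ℝ) ^ 2 * H ^ 2 = ∑ α : Fin m, (LinearMap.trace ℝ V (A α)) ^ 2)
    (hRic : ∀ X : V, ‖X‖ = 1 →
      RicCurv m n c A X ≥ (n : ℝ) * ((n : ℝ) - 1) / ((n : ℝ) + 2) * (c + H ^ 2)) :
    Ssec m A - (n : ℝ) * H ^ 2
      ≤ 2 * (n : ℝ) * ((n : ℝ) - 1) / ((n : ℝ) + 2) * (c + H ^ 2) := by
  let e : OrthonormalBasis (Fin n) ℝ V := (stdOrthonormalBasis ℝ V).reindex (finCongr hdim)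
  have hscalar : n * ((n : ℝ) * (n - 1) / (n + 2) * (c + H ^ 2)) ≤ ∑ i, RicCurv m n c A (e i) := by
    simpa using Finset.sum_le_sum (s := Finset.univ) fun i _ => hRic (e i) (e.orthonormal.1 i)
  rw [sum_ricCurv_orthonormalBasis m n c A hsymm e, ← hHdef, Fintype.card_fin] at hscalar
  have hpos : (0 : ℝ) < n + 2 := by positivity
  have hsplit : 2 * (n : ℝ) * (n - 1) / (n + 2) * (c + H ^ 2)
      = n * (n - 1) * (c + H ^ 2) - n * ((n : ℝ) * (n - 1) / (n + 2) * (c + H ^ 2)) := by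
    field_simp
    ring
  rw [hsplit]
  linarith

theorem traceless_second_fundamental_form_bound {V : Type*} [NormedAddCommGroup V] [InnerProductSpace ℝ V]
    [FiniteDimensional ℝ V] (n m : ℕ)
    (hdim : Module.finrank ℝ V = n)
    (A : Fin m → V →ₗ[ℝ] V) (hsymm : ∀ α : Fin m, (A α).IsSymmetric)
    (c H : ℝ) (hH : 0 ≤ H)
    (hHdef : (n : ℝ) ^ 2 * H ^ 2 = ∑ α : Fin m, (LinearMap.trace ℝ V (A α)) ^ 2)
    (hn : 2 ≤ n)
    (hRic : ∀ X : V, ‖X‖ = 1 →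
      RicCurv m n c A X ≥ (n : ℝ) * ((n : ℝ) - 1) / ((n : ℝ) + 2) * (c + H ^ 2)) :
    Ssec m A - (n : ℝ) * H ^ 2
      ≤ 2 * (n : ℝ) * ((n : ℝ) - 1) / ((n : ℝ) + 2) * (c + H ^ 2) :=
  traceless_second_fundamental_form_bound_general n m hdim A hsymm c H hHdef hRic
end
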